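/- Let T ⊂ ℝ³ be open with a marked point x_T and ℓ ≥ 0 an integer. Then the space of ℝ³-valued polynomials of total degree ≤ ℓ decomposes as P^ℓ(T)³ = G^ℓ(T) ⊕ G^{c,ℓ}(T), where G^ℓ(T) = grad P^{ℓ+1}(T) and G^{c,ℓ}(T) = (x - x_T) × P^{ℓ-1}(T)³. -/

import Mathlib

open MvPolynomial

/-- ℝ³-valued polynomials of total degree ≤ ℓ on an element `T ⊂ ℝ³`. -/
def PvecT (ℓ : ℕ) : Set ((Fin 3 → ℝ) → (Fin 3 → ℝ)) :=
  {v | ∃ p : Fin 3 → MvPolynomial (Fin 3) ℝ,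
    (∀ i, (p i).totalDegree ≤ ℓ) ∧ ∀ x i, v x i = eval x (p i)}

/-- `G^ℓ(T) = grad P^{ℓ+1}(T)`. -/
def GolyT (ℓ : ℕ) : Set ((Fin 3 → ℝ) → (Fin 3 → ℝ)) :=
  {v | ∃ p : MvPolynomial (Fin 3) ℝ, p.totalDegree ≤ ℓ + 1 ∧
    ∀ x i, v x i = eval x (pderiv i p)}

/-- `G^{c,ℓ}(T) = (x - x_T) × P^{ℓ-1}(T)³`, with the convention `P^{-1} = {0}`. -/
def GolyCT (ℓ : ℕ) (xT : Fin 3 → ℝ) : Set ((Fin 3 → ℝ) → (Fin 3 → ℝ)) :=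
  {v | ∃ w : Fin 3 → MvPolynomial (Fin 3) ℝ,
    ((∀ i, (w i).totalDegree + 1 ≤ ℓ) ∨ (∀ i, w i = 0)) ∧
    ∀ x, v x = crossProduct (fun i => x i - xT i) (fun i => eval x (w i))}

/-! Translating, we may take `x_T = 0`. Writing `E = ∑ i, X i * ∂ᵢ` for the Euler operator, every
polynomial field `v` satisfies `grad (x ⬝ᵥ v) - x ⨯₃ curl v = (1 + E) v`, and `1 + E` is invertible
on polynomials without raising the degree, since it multiplies a monomial of degree `n` by `n + 1`.
Applying the identity to `v = (1 + E)⁻¹ u` splits `u`. The sum is direct: if `grad q = x ⨯₃ ω`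
then `E q = x ⬝ᵥ grad q = 0`, so `q` is constant. -/

open Matrix

theorem comp_cross {R S F : Type*} [CommRing R] [CommRing S] [FunLike F R S] [RingHomClass F R S]
    (f : F) (u v : Fin 3 → R) : f ∘ (u ⨯₃ v) = (f ∘ u) ⨯₃ (f ∘ v) := by
  ext i
  fin_cases i <;> simp [cross_apply]

namespace MvPolynomial

variable {σ : Type*}

theorem totalDegree_X_le {R : Type*} [CommSemiring R] (j : σ) :
    (X j : MvPolynomial σ R).totalDegree ≤ 1 := by
  simpa [X] using totalDegree_monomial_le (Finsupp.single j 1) (1 : R)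

theorem totalDegree_pderiv_le {R : Type*} [CommSemiring R] (q : MvPolynomial σ R) (i : σ) :
    (pderiv i q).totalDegree ≤ q.totalDegree - 1 := by
  conv_lhs => rw [← sum_homogeneousComponent q]
  rw [map_sum]
  refine (totalDegree_finsetSum _ _).trans (Finset.sup_le fun n hn => ?_)
  refine (homogeneousComponent_isHomogeneous n q).pderiv.totalDegree_le.trans ?_
  rw [Finset.mem_range] at hn
  omega

theorem totalDegree_aeval_le {R : Type*} [CommSemiring R] {f : σ → MvPolynomial σ R}
    (hf : ∀ j, (f j).totalDegree ≤ 1) (q : MvPolynomial σ R) :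
    (aeval f q).totalDegree ≤ q.totalDegree := by
  conv_lhs => rw [q.as_sum]
  rw [map_sum]
  refine (totalDegree_finsetSum _ _).trans (Finset.sup_le fun s hs => ?_)
  rw [aeval_monomial, Algebra.algebraMap_eq_smul_one, smul_one_mul]
  refine (totalDegree_smul_le _ _).trans <| (totalDegree_finsetProd _ _).trans <|
    (Finset.sum_le_sum fun j _ => (totalDegree_pow _ _).trans
      ((Nat.mul_le_mul_left _ (hf j)).trans (mul_one _).le)).trans (le_totalDegree hs)

section Euler

theorem coeff_sum_X_mul_pderiv {R : Type*} [CommSemiring R] [Fintype σ] (q : MvPolynomial σ R)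
    (d : σ →₀ ℕ) : coeff d (∑ i, X i * pderiv i q) = d.degree * coeff d q := by
  classical
  induction q using MvPolynomial.induction_on' with
  | monomial s a =>
    rw [Finset.sum_congr rfl fun i _ => X_mul_pderiv_monomial, ← Finset.sum_smul,
      ← Finsupp.degree_eq_sum, coeff_smul, coeff_monomial, nsmul_eq_mul]
    split_ifs with h <;> simp [h]
  | add p q hp hq => simp only [map_add, mul_add, Finset.sum_add_distrib, coeff_add, hp, hq]

theorem eq_C_of_sum_X_mul_pderiv_eq_zero {R : Type*} [CommRing R] [IsDomain R] [CharZero R]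
    [Fintype σ] {q : MvPolynomial σ R} (h : ∑ i, X i * pderiv i q = 0) : q = C (coeff 0 q) := by
  classical
  ext d
  rcases eq_or_ne d 0 with rfl | hd
  · simp
  · have := coeff_sum_X_mul_pderiv q d
    rw [h, coeff_zero, eq_comm, mul_eq_zero, Nat.cast_eq_zero, Finsupp.degree_eq_zero_iff] at this
    rw [coeff_C, if_neg (Ne.symm hd), this.resolve_left hd]

variable {K : Type*} [Field K]

noncomputable def invOneAddEuler (q : MvPolynomial σ K) : MvPolynomial σ K :=
  ∑ d ∈ q.support, monomial d (coeff d q / (d.degree + 1))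

theorem coeff_invOneAddEuler (q : MvPolynomial σ K) (d : σ →₀ ℕ) :
    coeff d (invOneAddEuler q) = coeff d q / (d.degree + 1) := by
  classical
  simp only [invOneAddEuler, coeff_sum, coeff_monomial, Finset.sum_ite_eq', mem_support_iff]
  split_ifs with h
  · rfl
  · simp [not_not.mp h]

theorem totalDegree_invOneAddEuler_le (q : MvPolynomial σ K) :
    (invOneAddEuler q).totalDegree ≤ q.totalDegree :=
  totalDegree_le_of_support_subset fun d hd => by
    rw [mem_support_iff, coeff_invOneAddEuler] at hd
    exact mem_support_iff.mpr fun h => hd (by rw [h, zero_div])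

theorem invOneAddEuler_add_sum_X_mul_pderiv [CharZero K] [Fintype σ] (q : MvPolynomial σ K) :
    invOneAddEuler q + ∑ i, X i * pderiv i (invOneAddEuler q) = q := by
  ext d
  rw [coeff_add, coeff_sum_X_mul_pderiv, coeff_invOneAddEuler]
  field_simp
  ring

end Euler

section Translate

variable {R : Type*} [CommSemiring R]

noncomputable def translate (a : σ → R) : MvPolynomial σ R →ₐ[R] MvPolynomial σ R :=
  aeval fun j => X j + C (a j)

@[simp]
theorem translate_X (a : σ → R) (j : σ) : translate a (X j) = X j + C (a j) := aeval_X _ _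

theorem translate_translate (a b : σ → R) (q : MvPolynomial σ R) :
    translate b (translate a q) = translate (a + b) q := by
  rw [← AlgHom.comp_apply]
  congr 1
  ext j
  simp [add_assoc, add_comm (C (a j))]

theorem translate_zero : translate (0 : σ → R) = AlgHom.id R _ := by
  ext j
  simp

theorem totalDegree_translate_le (a : σ → R) (q : MvPolynomial σ R) :
    (translate a q).totalDegree ≤ q.totalDegree :=
  totalDegree_aeval_le (fun j => (totalDegree_add _ _).trans (by simp [totalDegree_X_le])) q

theorem pderiv_translate (a : σ → R) (i : σ) (q : MvPolynomial σ R) :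
    pderiv i (translate a q) = translate a (pderiv i q) := by
  classical
  induction q using MvPolynomial.induction_on with
  | C c => simp
  | add p q hp hq => simp only [map_add, hp, hq]
  | mul_X p j hp =>
    simp only [map_mul, pderiv_mul, hp, translate_X, map_add, pderiv_C, add_zero, pderiv_X]
    by_cases h : i = j <;> simp [h]

theorem translate_neg_translate {R : Type*} [CommRing R] (a : σ → R) (q : MvPolynomial σ R) :
    translate (-a) (translate a q) = q := by
  rw [translate_translate, add_neg_cancel, translate_zero, AlgHom.id_apply]

end Translate

section VectorCalculus

variable {R : Type*} [CommRing R]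

noncomputable def curl (v : Fin 3 → MvPolynomial (Fin 3) R) : Fin 3 → MvPolynomial (Fin 3) R :=
  ![pderiv 1 (v 2) - pderiv 2 (v 1), pderiv 2 (v 0) - pderiv 0 (v 2),
    pderiv 0 (v 1) - pderiv 1 (v 0)]

theorem pderiv_dotProduct_sub_cross_curl (v : Fin 3 → MvPolynomial (Fin 3) R) (i : Fin 3) :
    pderiv i (X ⬝ᵥ v) - (X ⨯₃ curl v) i = v i + ∑ j, X j * pderiv j (v i) := by
  fin_cases i <;>
  · simp [curl, cross_apply, dotProduct, Fin.sum_univ_three]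
    ring

theorem totalDegree_curl_add_one_le_or_curl_eq_zero {ℓ : ℕ} {v : Fin 3 → MvPolynomial (Fin 3) R}
    (hv : ∀ j, (v j).totalDegree ≤ ℓ) : (∀ i, (curl v i).totalDegree + 1 ≤ ℓ) ∨ curl v = 0 := by
  rcases ℓ with _ | n
  · right
    have hd : ∀ j k, pderiv k (v j) = 0 := fun j k => by
      rw [totalDegree_eq_zero_iff_eq_C.mp (Nat.le_zero.mp (hv j)), pderiv_C]
    ext i : 1
    fin_cases i <;> simp [curl, hd]
  · left
    have hd : ∀ j k, (pderiv k (v j)).totalDegree ≤ n := fun j k =>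
      (totalDegree_pderiv_le _ _).trans (by have := hv j; omega)
    intro i
    fin_cases i <;>
    · simp only [curl, add_le_add_iff_right]
      exact (totalDegree_sub _ _).trans (max_le (hd _ _) (hd _ _))

theorem totalDegree_cross_le {u w : Fin 3 → MvPolynomial (Fin 3) R} {m n : ℕ}
    (hu : ∀ j, (u j).totalDegree ≤ m) (hw : ∀ j, (w j).totalDegree ≤ n) (i : Fin 3) :
    ((u ⨯₃ w) i).totalDegree ≤ m + n := by
  have hmul : ∀ j k, (u j * w k).totalDegree ≤ m + n := fun j k =>
    (totalDegree_mul _ _).trans (add_le_add (hu j) (hw k))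
  fin_cases i <;>
  · simp only [cross_apply]
    exact (totalDegree_sub _ _).trans (max_le (hmul _ _) (hmul _ _))

theorem eval_cross_X_sub_C (x a : Fin 3 → R) (w : Fin 3 → MvPolynomial (Fin 3) R) (i : Fin 3) :
    eval x (((fun j => X j - C (a j)) ⨯₃ w) i) =
      ((fun j => x j - a j) ⨯₃ fun j => eval x (w j)) i := by
  have hX : (eval x ∘ fun j => X j - C (a j)) = fun j => x j - a j := by
    ext j
    simp
  rw [← Function.comp_apply (f := eval x), comp_cross, hX]
  rfl

end VectorCalculus

theorem pderiv_eq_zero_of_pderiv_eq_cross {R : Type*} [CommRing R] [IsDomain R] [CharZero R]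
    (a : Fin 3 → R) {q : MvPolynomial (Fin 3) R} {ω : Fin 3 → MvPolynomial (Fin 3) R}
    (h : ∀ i, pderiv i q = ((fun j => X j - C (a j)) ⨯₃ ω) i) (i : Fin 3) : pderiv i q = 0 := by
  have hEuler : ∑ j, X j * pderiv j (translate a q) = 0 := by
    have := congrArg (translate a) (dot_self_cross (fun j => X j - C (a j)) ω)
    simpa [dotProduct, ← h, pderiv_translate] using this
  apply Function.LeftInverse.injective (translate_neg_translate a)
  rw [← pderiv_translate, eq_C_of_sum_X_mul_pderiv_eq_zero hEuler, pderiv_C, map_zero]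

section Decomposition

variable {K : Type*} [Field K] [CharZero K]

theorem eq_pderiv_add_X_cross (u : Fin 3 → MvPolynomial (Fin 3) K) (i : Fin 3) :
    u i = pderiv i (X ⬝ᵥ (invOneAddEuler ∘ u)) + (X ⨯₃ (-curl (invOneAddEuler ∘ u))) i := by
  rw [map_neg, Pi.neg_apply, ← sub_eq_add_neg, pderiv_dotProduct_sub_cross_curl,
    Function.comp_apply, invOneAddEuler_add_sum_X_mul_pderiv]

theorem exists_eq_pderiv_add_cross (a : Fin 3 → K) {ℓ : ℕ}
    {p : Fin 3 → MvPolynomial (Fin 3) K} (hp : ∀ i, (p i).totalDegree ≤ ℓ) :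
    ∃ φ ω, φ.totalDegree ≤ ℓ + 1 ∧ ((∀ i, (ω i).totalDegree + 1 ≤ ℓ) ∨ ∀ i, ω i = 0) ∧
      ∀ i, p i = pderiv i φ + ((fun j => X j - C (a j)) ⨯₃ ω) i := by
  set u := translate a ∘ p
  set v := invOneAddEuler ∘ u
  have hv : ∀ j, (v j).totalDegree ≤ ℓ := fun j =>
    (totalDegree_invOneAddEuler_le _).trans ((totalDegree_translate_le _ _).trans (hp j))
  have hdot : (X ⬝ᵥ v).totalDegree ≤ ℓ + 1 :=
    (totalDegree_finsetSum _ _).trans <| Finset.sup_le fun j _ =>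
      (totalDegree_mul _ _).trans (by have := totalDegree_X_le (R := K) j; have := hv j; omega)
  refine ⟨translate (-a) (X ⬝ᵥ v), translate (-a) ∘ (-curl v),
    (totalDegree_translate_le _ _).trans hdot, ?_, fun i => ?_⟩
  · rcases totalDegree_curl_add_one_le_or_curl_eq_zero hv with hc | hc
    · refine Or.inl fun i => ?_
      have := totalDegree_translate_le (-a) (-curl v i)
      rw [totalDegree_neg] at this
      have := hc i
      simp only [Function.comp_apply, Pi.neg_apply]
      omega
    · exact Or.inr fun i => by simp [hc]
  · have hu := congrArg (translate (-a)) (eq_pderiv_add_X_cross u i)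
    rw [show translate (-a) (u i) = p i from translate_neg_translate a (p i)] at hu
    have hX : (translate (-a) ∘ X) = fun j => X j - C (a j) := by
      ext j : 1
      simp [sub_eq_add_neg]
    rw [hu, map_add, pderiv_translate, ← hX, ← comp_cross]
    rfl

end Decomposition

end MvPolynomial

theorem add_mem_PvecT {ℓ : ℕ} {a : Fin 3 → ℝ} {g c : (Fin 3 → ℝ) → Fin 3 → ℝ}
    (hg : g ∈ GolyT ℓ) (hc : c ∈ GolyCT ℓ a) : g + c ∈ PvecT ℓ := by
  obtain ⟨P, hP, hgP⟩ := hg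
  obtain ⟨w, hw, hcw⟩ := hc
  refine ⟨fun i => pderiv i P + ((fun j => X j - C (a j)) ⨯₃ w) i, fun i => ?_, fun x i => ?_⟩
  · refine (totalDegree_add _ _).trans (max_le ((totalDegree_pderiv_le _ _).trans (by omega)) ?_)
    rcases hw with hw | hw
    · have hX : ∀ j, (X j - C (a j) : MvPolynomial (Fin 3) ℝ).totalDegree ≤ 1 := fun j =>
        (totalDegree_sub_C_le _ _).trans (totalDegree_X_le j)
      have := totalDegree_cross_le hX (fun j => Nat.le_sub_one_of_lt (hw j)) i
      have := hw 0
      omega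
    · simp [show w = 0 from funext hw]
  · rw [Pi.add_apply, Pi.add_apply, hgP, hcw, map_add, eval_cross_X_sub_C]

theorem exists_GolyT_add_GolyCT_of_mem_PvecT {ℓ : ℕ} (a : Fin 3 → ℝ) {v : (Fin 3 → ℝ) → Fin 3 → ℝ}
    (hv : v ∈ PvecT ℓ) : ∃ g ∈ GolyT ℓ, ∃ c ∈ GolyCT ℓ a, v = g + c := by
  obtain ⟨p, hp, hvp⟩ := hv
  obtain ⟨φ, ω, hφ, hω, hpφω⟩ := exists_eq_pderiv_add_cross a hp
  refine ⟨_, ⟨φ, hφ, fun _ _ => rfl⟩, _, ⟨ω, hω, fun _ => rfl⟩, ?_⟩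
  ext x i
  rw [hvp, hpφω, map_add, eval_cross_X_sub_C]
  rfl

theorem eq_of_mem_GolyT_of_add_eq_add {ℓ : ℕ} {a : Fin 3 → ℝ} {g g' c c' : (Fin 3 → ℝ) → Fin 3 → ℝ}
    (hg : g ∈ GolyT ℓ) (hg' : g' ∈ GolyT ℓ) (hc : c ∈ GolyCT ℓ a) (hc' : c' ∈ GolyCT ℓ a)
    (h : g + c = g' + c') : g = g' := by
  obtain ⟨P, -, hgP⟩ := hg
  obtain ⟨P', -, hgP'⟩ := hg'
  obtain ⟨w, -, hcw⟩ := hc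
  obtain ⟨w', -, hcw'⟩ := hc'
  have hpoly : ∀ i, pderiv i (P - P') = ((fun j => X j - C (a j)) ⨯₃ (w' - w)) i := fun i => by
    rw [map_sub, map_sub, Pi.sub_apply, sub_eq_sub_iff_add_eq_add]
    refine MvPolynomial.funext fun x => ?_
    have := congrFun (congrFun h x) i
    simp only [Pi.add_apply, hgP, hgP', hcw, hcw'] at this
    rw [map_add, map_add, eval_cross_X_sub_C, eval_cross_X_sub_C, this, add_comm]
  ext x i
  rw [hgP, hgP', ← sub_eq_zero, ← map_sub, ← map_sub, pderiv_eq_zero_of_pderiv_eq_cross a hpoly,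
    map_zero]

/-- Direct decomposition `P^ℓ(T)³ = G^ℓ(T) ⊕ G^{c,ℓ}(T)`. -/
theorem Pvec_direct_sum_Goly_GolyC (ℓ : ℕ) (xT : Fin 3 → ℝ) :
    (∀ v, v ∈ PvecT ℓ ↔ ∃ g ∈ GolyT ℓ, ∃ c ∈ GolyCT ℓ xT, v = g + c) ∧
    (∀ g g' c c', g ∈ GolyT ℓ → g' ∈ GolyT ℓ → c ∈ GolyCT ℓ xT → c' ∈ GolyCT ℓ xT →
      g + c = g' + c' → g = g' ∧ c = c') := by
  refine ⟨fun v => ⟨exists_GolyT_add_GolyCT_of_mem_PvecT xT, ?_⟩,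
    fun g g' c c' hg hg' hc hc' h => ?_⟩
  · rintro ⟨g, hg, c, hc, rfl⟩
    exact add_mem_PvecT hg hc
  · obtain rfl := eq_of_mem_GolyT_of_add_eq_add hg hg' hc hc' h
    exact ⟨rfl, add_left_cancel h⟩
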